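/- arXiv:2303.13366 — 4 statements merged into one kernel-verified Lean document; each statement's English description precedes it below -/
import Mathlib

section
/- For every integer t, setting X = 1215t^11 - 1782t^9 + 4671t^7 - 774t^5 - 366t^3 + 52t, Y = 1215t^11 - 1782t^9 + 4671t^7 - 5634t^5 + 1902t^3 - 164t, R = 5904900t^19 - 14368590t^17 + 41898546t^15 - 55842858t^13 + 58236894t^11 - 36547200t^9 + 12314916t^7 - 2186784t^5 + 193392t^3 - 6720t, and S = 984150t^17 + 721710t^15 + 1395306t^13 - 1476954t^11 + 3664440t^9 - 3124332t^7 + 1027296t^5 - 140112t^3 + 6720t, one has X^4 - Y^4 = R^2 - S^2. -/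
theorem stmt_1 (t : ℤ) :
    let X := 1215*t^11 - 1782*t^9 + 4671*t^7 - 774*t^5 - 366*t^3 + 52*t
    let Y := 1215*t^11 - 1782*t^9 + 4671*t^7 - 5634*t^5 + 1902*t^3 - 164*t
    let R := 5904900*t^19 - 14368590*t^17 + 41898546*t^15 - 55842858*t^13 +
      58236894*t^11 - 36547200*t^9 + 12314916*t^7 - 2186784*t^5 + 193392*t^3 - 6720*t
    let S := 984150*t^17 + 721710*t^15 + 1395306*t^13 - 1476954*t^11 + 3664440*t^9 -
      3124332*t^7 + 1027296*t^5 - 140112*t^3 + 6720*t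
    X^4 - Y^4 = R^2 - S^2 := by intro X Y R S; simp only [X, Y, R, S]; ring
end

section
/- For every integer t, setting X = 2187t^15 + 5103t^13 + 6075t^11 + 4617t^9 + 2322t^7 + 756t^5 + 144t^3 + 12t, Y = 2187t^15 + 5103t^13 + 6075t^11 + 4293t^9 + 1890t^7 + 504t^5 + 72t^3 + 4t, R = 4251528t^27 + 18068994t^25 + 38381850t^23 + 52986636t^21 + 52435512t^19 + 38959218t^17 + 22221378t^15 + 9803592t^13 + 3331692t^11 + 858168t^9 + 162216t^7 + 21216t^5 + 1712t^3 + 64t, and S = 2125764t^27 + 9565938t^25 + 21139542t^23 + 30154356t^21 + 30784212t^19 + 23632722t^17 + 13977846t^15 + 6426864t^13 + 2290356t^11 + 623160t^9 + 125496t^7 + 17664t^5 + 1552t^3 + 64t, one has X^4 - Y^4 = R^2 - S^2. -/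
theorem stmt_2 (t : ℤ) :
    let X := 2187*t^15 + 5103*t^13 + 6075*t^11 + 4617*t^9 + 2322*t^7 + 756*t^5 + 144*t^3 + 12*t
    let Y := 2187*t^15 + 5103*t^13 + 6075*t^11 + 4293*t^9 + 1890*t^7 + 504*t^5 + 72*t^3 + 4*t
    let R := 4251528*t^27 + 18068994*t^25 + 38381850*t^23 + 52986636*t^21 + 52435512*t^19 +
      38959218*t^17 + 22221378*t^15 + 9803592*t^13 + 3331692*t^11 + 858168*t^9 +
      162216*t^7 + 21216*t^5 + 1712*t^3 + 64*t
    let S := 2125764*t^27 + 9565938*t^25 + 21139542*t^23 + 30154356*t^21 + 30784212*t^19 +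
      23632722*t^17 + 13977846*t^15 + 6426864*t^13 + 2290356*t^11 + 623160*t^9 +
      125496*t^7 + 17664*t^5 + 1552*t^3 + 64*t
    X^4 - Y^4 = R^2 - S^2 := by intro X Y R S; simp only [X, Y, R, S]; ring
end

section
/- For every rational t with 15t^2 ≠ 2 and 27t^6 - 27t^4 + 36t^2 - 10 ≠ 0, the rational quadruple X = t(1215t^10 - 1782t^8 + 4671t^6 - 774t^4 - 366t^2 + 52)/(3(2-15t^2)(27t^6 - 27t^4 + 36t^2 - 10)), Y = t(1215t^10 - 1782t^8 + 4671t^6 - 5634t^4 + 1902t^2 - 164)/(3(2-15t^2)(27t^6 - 27t^4 + 36t^2 - 10)), R = -t(324t^8 - 378t^6 + 1296t^4 - 570t^2 + 56)/(3(27t^6 - 27t^4 + 36t^2 - 10)), S = t(810t^8 + 1512t^6 + 1674t^4 - 1092t^2 + 112)/(3(2-15t^2)(27t^6 - 27t^4 + 36t^2 - 10)) satisfies X^4 - Y^4 = R^2 - S^2. -/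
theorem stmt_11 (t : ℚ) (h1 : 15 * t ^ 2 ≠ 2) (h2 : 27*t^6 - 27*t^4 + 36*t^2 - 10 ≠ 0) :
    let X := t*(1215*t^10 - 1782*t^8 + 4671*t^6 - 774*t^4 - 366*t^2 + 52) /
      (3*(2 - 15*t^2)*(27*t^6 - 27*t^4 + 36*t^2 - 10))
    let Y := t*(1215*t^10 - 1782*t^8 + 4671*t^6 - 5634*t^4 + 1902*t^2 - 164) /
      (3*(2 - 15*t^2)*(27*t^6 - 27*t^4 + 36*t^2 - 10))
    let R := -t*(324*t^8 - 378*t^6 + 1296*t^4 - 570*t^2 + 56) /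
      (3*(27*t^6 - 27*t^4 + 36*t^2 - 10))
    let S := t*(810*t^8 + 1512*t^6 + 1674*t^4 - 1092*t^2 + 112) /
      (3*(2 - 15*t^2)*(27*t^6 - 27*t^4 + 36*t^2 - 10))
    X^4 - Y^4 = R^2 - S^2 := by
  have h3 : (2 : ℚ) - 15*t^2 ≠ 0 := fun h => h1 (by linarith)
  intro X Y R S
  simp only [X, Y, R, S]
  rw [div_pow, div_pow, div_pow, div_pow, div_sub_div _ _ (by simp [h2, h3]) (by simp [h2, h3]),
    div_sub_div _ _ (by simp [h2, h3]) (by simp [h2, h3]), div_eq_div_iff (by simp [h2, h3]) (by simp [h2, h3])]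
  ring
end

section
/- For every rational t with 27t^6 + 27t^4 + 12t^2 + 2 ≠ 0, the rational quadruple X = -3t(27t^8 + 36t^6 + 27t^4 + 12t^2 + 2)/(27t^6 + 27t^4 + 12t^2 + 2), Y = -t(81t^8 + 108t^6 + 81t^4 + 24t^2 + 2)/(27t^6 + 27t^4 + 12t^2 + 2), R = -2t(108t^8 + 135t^6 + 102t^4 + 35t^2 + 4)/(27t^6 + 27t^4 + 12t^2 + 2), S = -2t(54t^8 + 81t^6 + 60t^4 + 25t^2 + 4)/(27t^6 + 27t^4 + 12t^2 + 2) satisfies X^4 - Y^4 = R^2 - S^2. -/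
theorem stmt_12 (t : ℚ) (h : 27*t^6 + 27*t^4 + 12*t^2 + 2 ≠ 0) :
    let X := -3*t*(27*t^8 + 36*t^6 + 27*t^4 + 12*t^2 + 2) / (27*t^6 + 27*t^4 + 12*t^2 + 2)
    let Y := -t*(81*t^8 + 108*t^6 + 81*t^4 + 24*t^2 + 2) / (27*t^6 + 27*t^4 + 12*t^2 + 2)
    let R := -2*t*(108*t^8 + 135*t^6 + 102*t^4 + 35*t^2 + 4) / (27*t^6 + 27*t^4 + 12*t^2 + 2)
    let S := -2*t*(54*t^8 + 81*t^6 + 60*t^4 + 25*t^2 + 4) / (27*t^6 + 27*t^4 + 12*t^2 + 2)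
    X^4 - Y^4 = R^2 - S^2 := by
  intro X Y R S
  simp only [X, Y, R, S, div_pow]
  field_simp
  ring
end
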